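/- arXiv:2602.05030 — 2 statements merged into one kernel-verified Lean document; each statement's English description precedes it below -/
import Mathlib

section
/- Let H be a tree-based hierarchy with canonical aggregation matrix A, positive initial predictions ŷ, and top-heavy weight matrices W(M). Let c be an item that is a child in some constraint, say c ∈ C_k with parent p_k. Then lim_{M→∞} y_c(M) exists and is finite, and lim_{M→∞} λ_k(M)/M^{H(p_k)−1} = lim_{M→∞} (y_c(M)/ŷ_c) − 1. -/
open Matrix Filter Topology

/-- A tree-based hierarchy in canonical form on items `Fin N` with `K` constraints.
Constraint `k` has parent item `parent k` and nonempty child set `children k`;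
each item is a child in at most one constraint, and the height function satisfies
`H(c) = H(p_k) - 1` (equivalently `H(p_k) = H(c) + 1`) for every child `c` of `p_k`. -/
structure TreeHierarchy (N K : ℕ) where
  parent : Fin K → Fin N
  children : Fin K → Finset (Fin N)
  children_nonempty : ∀ k, (children k).Nonempty
  parent_notMem : ∀ k, parent k ∉ children k
  child_unique : ∀ k j : Fin K, ∀ n : Fin N, n ∈ children k → n ∈ children j → k = j
  height : Fin N → ℕ
  height_child : ∀ k : Fin K, ∀ c ∈ children k, height (parent k) = height c + 1

variable {N K : ℕ}

/-- The canonical aggregation matrix of a tree-based hierarchy: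
`A k (p_k) = 1`, `A k c = -1` for `c ∈ C_k`, and `0` otherwise. -/
noncomputable def aggMatrix (T : TreeHierarchy N K) : Matrix (Fin K) (Fin N) ℝ :=
  fun k n => if n = T.parent k then 1 else if n ∈ T.children k then -1 else 0

/-- The top-heavy weight matrix: diagonal with entries `w_n(M) = M^(H n) / yhat n`. -/
noncomputable def topW (T : TreeHierarchy N K) (yhat : Fin N → ℝ) (M : ℝ) :
    Matrix (Fin N) (Fin N) ℝ :=
  Matrix.diagonal fun n => M ^ T.height n / yhat n

/-- `λ(M) = (A W(M)⁻¹ Aᵀ)⁻¹ A ŷ`. -/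
noncomputable def lamTop (T : TreeHierarchy N K) (yhat : Fin N → ℝ) (M : ℝ) : Fin K → ℝ :=
  (aggMatrix T * (topW T yhat M)⁻¹ * (aggMatrix T)ᵀ)⁻¹.mulVec ((aggMatrix T).mulVec yhat)

/-- `y(M) = ŷ - W(M)⁻¹ Aᵀ λ(M)`. -/
noncomputable def yTop (T : TreeHierarchy N K) (yhat : Fin N → ℝ) (M : ℝ) : Fin N → ℝ :=
  yhat - ((topW T yhat M)⁻¹ * (aggMatrix T)ᵀ).mulVec (lamTop T yhat M)


/-!
Rescale the multipliers by `D(M) = diag (M ^ (H(p_k) - 1))`. Entrywise, `W(M)⁻¹ Aᵀ D(M)`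
converges to `-diag(ŷ) Sᵀ`, where `S` is the incidence matrix of the child sets: a child sits
exactly one level below its parent, while the parent's own entry decays like `M⁻¹`. Hence
`A W(M)⁻¹ Aᵀ D(M)` converges to `C = -A diag(ŷ) Sᵀ`, which is triangular with respect to the
heights of the parents and has positive diagonal, so it is invertible and
`μ(M) = D(M)⁻¹ λ(M) → C⁻¹ A ŷ`. Finally `y(M) = ŷ - (W(M)⁻¹ Aᵀ D(M)) μ(M)`, whose `c`-th
coordinate tends to `ŷ_c (1 + lim μ_k)`.
-/

namespace Matrix

theorem inv_diagonal_of_ne_zero {n 𝕜 : Type*} [Fintype n] [DecidableEq n] [Field 𝕜]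
    {d : n → 𝕜} (hd : ∀ i, d i ≠ 0) : (diagonal d)⁻¹ = diagonal d⁻¹ :=
  inv_eq_left_inv <| by simp [hd]

end Matrix

namespace TreeHierarchy

variable (T : TreeHierarchy N K)

theorem one_le_height_parent (k : Fin K) : 1 ≤ T.height (T.parent k) := by
  obtain ⟨c, hc⟩ := T.children_nonempty k
  rw [T.height_child k c hc]
  omega

theorem aggMatrix_parent (k : Fin K) : aggMatrix T k (T.parent k) = 1 := by
  simp [aggMatrix]

theorem aggMatrix_of_mem_children {k : Fin K} {n : Fin N} (hn : n ∈ T.children k) :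
    aggMatrix T k n = -1 := by
  have hp : n ≠ T.parent k := by
    rintro rfl
    exact T.parent_notMem k hn
  simp [aggMatrix, hp, hn]

theorem aggMatrix_of_ne_of_notMem {k : Fin K} {n : Fin N} (hp : n ≠ T.parent k)
    (hn : n ∉ T.children k) : aggMatrix T k n = 0 := by
  simp [aggMatrix, hp, hn]

def childMatrix : Matrix (Fin K) (Fin N) ℝ :=
  fun k n => if n ∈ T.children k then 1 else 0

theorem childMatrix_transpose_mulVec_apply (u : Fin K → ℝ) {c : Fin N} {k : Fin K}
    (hc : c ∈ T.children k) : ((childMatrix T)ᵀ *ᵥ u) c = u k := by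
  rw [mulVec, dotProduct, Finset.sum_eq_single k]
  · simp [childMatrix, hc]
  · intro j _ hjk
    have hcj : c ∉ T.children j := fun hcj => hjk (T.child_unique j k c hcj hc)
    simp [childMatrix, hcj]
  · simp

noncomputable def parentScale (M : ℝ) : Matrix (Fin K) (Fin K) ℝ :=
  diagonal fun k => M ^ (T.height (T.parent k) - 1)

theorem parentScale_inv {M : ℝ} (hM : M ≠ 0) :
    (parentScale T M)⁻¹ = diagonal fun k => (M ^ (T.height (T.parent k) - 1))⁻¹ :=
  inv_diagonal_of_ne_zero fun _ => pow_ne_zero _ hM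

theorem parentScale_mul_inv {M : ℝ} (hM : M ≠ 0) :
    parentScale T M * (parentScale T M)⁻¹ = 1 := by
  rw [parentScale_inv T hM, parentScale, diagonal_mul_diagonal]
  simp [pow_ne_zero _ hM]

theorem topW_inv {yhat : Fin N → ℝ} (hy : ∀ n, yhat n ≠ 0) {M : ℝ} (hM : M ≠ 0) :
    (topW T yhat M)⁻¹ = diagonal fun n => yhat n / M ^ T.height n := by
  rw [topW, inv_diagonal_of_ne_zero fun n => div_ne_zero (pow_ne_zero _ hM) (hy n)]
  simp [Pi.inv_def]

theorem tendsto_aggMatrix_mul_pow_div_pow (i : Fin K) (n : Fin N) :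
    Tendsto (fun M : ℝ => aggMatrix T i n * M ^ (T.height (T.parent i) - 1) / M ^ T.height n)
      atTop (𝓝 (-childMatrix T i n)) := by
  by_cases hn : n ∈ T.children i
  · have hH : T.height (T.parent i) - 1 = T.height n := by
      have := T.height_child i n hn
      omega
    rw [show -childMatrix T i n = -1 by simp [childMatrix, hn]]
    refine tendsto_const_nhds.congr' ?_
    filter_upwards [eventually_gt_atTop 0] with M hM
    rw [aggMatrix_of_mem_children T hn, hH, neg_one_mul, neg_div, div_self (by positivity)]
  by_cases hp : n = T.parent i
  · subst hp
    rw [show -childMatrix T i (T.parent i) = 0 by simp [childMatrix, hn]]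
    refine tendsto_inv_atTop_zero.congr' ?_
    filter_upwards [eventually_gt_atTop 0] with M hM
    obtain ⟨h, hh⟩ := Nat.exists_eq_add_of_le' (T.one_le_height_parent i)
    rw [aggMatrix_parent, hh, Nat.add_sub_cancel, pow_succ]
    field_simp
  · simp [aggMatrix_of_ne_of_notMem T hp hn, childMatrix, hn]

theorem tendsto_topW_inv_mul_transpose_mul_parentScale {yhat : Fin N → ℝ}
    (hy : ∀ n, yhat n ≠ 0) :
    Tendsto (fun M => (topW T yhat M)⁻¹ * (aggMatrix T)ᵀ * parentScale T M) atTop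
      (𝓝 (-(diagonal yhat * (childMatrix T)ᵀ))) := by
  have hentry : ∀ᶠ M in atTop, (topW T yhat M)⁻¹ * (aggMatrix T)ᵀ * parentScale T M =
      of fun n i => yhat n * (aggMatrix T i n * M ^ (T.height (T.parent i) - 1) /
        M ^ T.height n) := by
    filter_upwards [eventually_ne_atTop 0] with M hM
    ext n i
    simp only [topW_inv T hy hM, parentScale, mul_diagonal, diagonal_mul, transpose_apply,
      of_apply]
    ring
  have hlim : -(diagonal yhat * (childMatrix T)ᵀ) = of fun n i => yhat n * -childMatrix T i n := by
    ext n i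
    simp [diagonal_mul]
  rw [hlim]
  refine Tendsto.congr' (hentry.mono fun _ h => h.symm) ?_
  exact tendsto_pi_nhds.2 fun n => tendsto_pi_nhds.2 fun i =>
    (T.tendsto_aggMatrix_mul_pow_div_pow i n).const_mul (yhat n)

noncomputable def limitGram (yhat : Fin N → ℝ) : Matrix (Fin K) (Fin K) ℝ :=
  -(aggMatrix T * diagonal yhat * (childMatrix T)ᵀ)

theorem tendsto_gram_mul_parentScale {yhat : Fin N → ℝ} (hy : ∀ n, yhat n ≠ 0) :
    Tendsto (fun M => aggMatrix T * (topW T yhat M)⁻¹ * (aggMatrix T)ᵀ * parentScale T M)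
      atTop (𝓝 (limitGram T yhat)) := by
  have hcont : Continuous fun P : Matrix (Fin N) (Fin K) ℝ => aggMatrix T * P :=
    continuous_const.matrix_mul continuous_id
  have := (hcont.tendsto _).comp (T.tendsto_topW_inv_mul_transpose_mul_parentScale hy)
  simpa only [limitGram, Function.comp_def, Matrix.mul_assoc, Matrix.mul_neg] using this

theorem limitGram_apply (yhat : Fin N → ℝ) (k j : Fin K) :
    limitGram T yhat k j = -∑ n ∈ T.children j, aggMatrix T k n * yhat n := by
  rw [limitGram, neg_apply, mul_apply]
  simp [mul_diagonal, childMatrix, Finset.sum_ite_mem]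

theorem limitGram_apply_self (yhat : Fin N → ℝ) (k : Fin K) :
    limitGram T yhat k k = ∑ n ∈ T.children k, yhat n := by
  rw [limitGram_apply, ← Finset.sum_neg_distrib]
  refine Finset.sum_congr rfl fun n hn => ?_
  rw [aggMatrix_of_mem_children T hn]
  ring

theorem limitGram_apply_eq_zero (yhat : Fin N → ℝ) {k j : Fin K} (hkj : k ≠ j)
    (hle : T.height (T.parent j) ≤ T.height (T.parent k)) : limitGram T yhat k j = 0 := by
  rw [limitGram_apply, neg_eq_zero]
  refine Finset.sum_eq_zero fun n hn => ?_
  have hp : n ≠ T.parent k := by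
    rintro rfl
    have := T.height_child j _ hn
    omega
  have hnk : n ∉ T.children k := fun h => hkj (T.child_unique k j n h hn)
  rw [aggMatrix_of_ne_of_notMem T hp hnk, zero_mul]

theorem det_limitGram_ne_zero {yhat : Fin N → ℝ} (hy : ∀ n, 0 < yhat n) :
    (limitGram T yhat).det ≠ 0 := by
  intro hdet
  obtain ⟨v, hv, hker⟩ := exists_mulVec_eq_zero_iff.2 hdet
  classical
  set s := Finset.univ.filter fun k => v k ≠ 0
  have hs : s.Nonempty := by
    obtain ⟨i, hi⟩ := Function.ne_iff.1 hv
    exact ⟨i, by simpa [s] using hi⟩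
  obtain ⟨k, hks, hmax⟩ := s.exists_max_image (fun k => T.height (T.parent k)) hs
  have hvk : v k ≠ 0 := (Finset.mem_filter.1 hks).2
  have hrow : (limitGram T yhat *ᵥ v) k = limitGram T yhat k k * v k := by
    refine Finset.sum_eq_single k (fun j _ hjk => ?_) fun h => absurd (Finset.mem_univ k) h
    by_cases hvj : v j = 0
    · rw [hvj, mul_zero]
    · have hzero := T.limitGram_apply_eq_zero yhat (Ne.symm hjk) (hmax j (by simp [s, hvj]))
      simp [hzero]
  have hdiag : 0 < limitGram T yhat k k := by
    rw [limitGram_apply_self]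
    exact Finset.sum_pos (fun n _ => hy n) (T.children_nonempty k)
  have := congrFun hker k
  rw [hrow, Pi.zero_apply] at this
  exact mul_ne_zero hdiag.ne' hvk this

theorem tendsto_parentScale_inv_mulVec_lamTop {yhat : Fin N → ℝ} (hy : ∀ n, 0 < yhat n) :
    Tendsto (fun M => (parentScale T M)⁻¹ *ᵥ lamTop T yhat M) atTop
      (𝓝 ((limitGram T yhat)⁻¹ *ᵥ (aggMatrix T *ᵥ yhat))) := by
  have hinv : ContinuousAt Inv.inv (limitGram T yhat) := by
    refine continuousAt_matrix_inv _ ?_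
    rw [Ring.inverse_eq_inv']
    exact continuousAt_inv₀ (T.det_limitGram_ne_zero hy)
  have hlim := ((continuous_id.matrix_mulVec (continuous_const (y := aggMatrix T *ᵥ yhat))).tendsto _).comp
    (hinv.tendsto.comp (T.tendsto_gram_mul_parentScale fun n => (hy n).ne'))
  refine hlim.congr fun M => ?_
  rw [Function.comp_apply, Function.comp_apply, id, Matrix.mul_inv_rev, ← mulVec_mulVec, lamTop]

theorem tendsto_yTop {yhat : Fin N → ℝ} (hy : ∀ n, 0 < yhat n) :
    Tendsto (yTop T yhat) atTop (𝓝 (yhat +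
      (diagonal yhat * (childMatrix T)ᵀ) *ᵥ ((limitGram T yhat)⁻¹ *ᵥ (aggMatrix T *ᵥ yhat)))) := by
  have hprod := (T.tendsto_topW_inv_mul_transpose_mul_parentScale fun n => (hy n).ne').prodMk_nhds
    (T.tendsto_parentScale_inv_mulVec_lamTop hy)
  have hlim := (((continuous_fst.matrix_mulVec continuous_snd).tendsto _).comp hprod).const_sub yhat
  simp only [Function.comp_def, neg_mulVec, sub_neg_eq_add] at hlim
  refine hlim.congr' ?_
  filter_upwards [eventually_ne_atTop 0] with M hM
  rw [yTop, mulVec_mulVec, Matrix.mul_assoc, parentScale_mul_inv T hM, Matrix.mul_one]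

end TreeHierarchy

theorem child_limit_general (T : TreeHierarchy N K) (yhat : Fin N → ℝ)
    (hy : ∀ n, 0 < yhat n)
    (c : Fin N) (k : Fin K) (hc : c ∈ T.children k) :
    ∃ L : ℝ, Tendsto (fun M : ℝ => yTop T yhat M c) atTop (𝓝 L) ∧
      Tendsto (fun M : ℝ => lamTop T yhat M k / M ^ (T.height (T.parent k) - 1))
        atTop (𝓝 (L / yhat c - 1)) := by
  set u := (T.limitGram yhat)⁻¹ *ᵥ (aggMatrix T *ᵥ yhat)
  have hL : (yhat + (diagonal yhat * (T.childMatrix)ᵀ) *ᵥ u) c = yhat c * (1 + u k) := by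
    rw [Pi.add_apply, ← mulVec_mulVec, mulVec_diagonal,
      T.childMatrix_transpose_mulVec_apply u hc]
    ring
  refine ⟨_, tendsto_pi_nhds.1 (T.tendsto_yTop hy) c, ?_⟩
  rw [hL, mul_div_cancel_left₀ _ (hy c).ne', add_sub_cancel_left]
  refine (tendsto_pi_nhds.1 (T.tendsto_parentScale_inv_mulVec_lamTop hy) k).congr' ?_
  filter_upwards [eventually_ne_atTop 0] with M hM
  rw [T.parentScale_inv hM, mulVec_diagonal, inv_mul_eq_div]

/-- With top-heavy weights, if `c ∈ C_k` is a child item with parent `p_k`,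
then `y_c(M)` converges to a finite limit `L` as `M → ∞`, and
`λ_k(M) / M^(H(p_k) - 1) → L / ŷ_c - 1`, i.e. the two limits in
`lim λ_k/M^(H(p_k)-1) = lim (y_c/ŷ_c) - 1` agree. -/
theorem child_limit (T : TreeHierarchy N K) (yhat : Fin N → ℝ)
    (hy : ∀ n, 0 < yhat n)
    (hinv : ∀ M : ℝ, 0 < M →
      IsUnit (aggMatrix T * (topW T yhat M)⁻¹ * (aggMatrix T)ᵀ).det)
    (c : Fin N) (k : Fin K) (hc : c ∈ T.children k) :
    ∃ L : ℝ, Tendsto (fun M : ℝ => yTop T yhat M c) atTop (𝓝 L) ∧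
      Tendsto (fun M : ℝ => lamTop T yhat M k / M ^ (T.height (T.parent k) - 1))
        atTop (𝓝 (L / yhat c - 1)) :=
  child_limit_general T yhat hy c k hc
end

section
/- Let H be a strict tree-based hierarchy with canonical aggregation matrix A whose rows are ordered so that D(p_1) ≤ D(p_2) ≤ ⋯ ≤ D(p_K), let ŷ be positive initial predictions, W(M) the bottom-heavy weight matrix, and L(M) = diag(M^{D(p_1)+1},…,M^{D(p_K)+1}). Then the matrix Q(M) = A·W(M)^{-1}·Aᵀ·L(M) satisfies: (1) Q(M)_{i,i} = M·ŷ_{p_i} + Σ_{c∈C_i} ŷ_c for all i; (2) for i > j, Q(M)_{i,j} is independent of M (it equals 0 or −ŷ_n for a shared item n); (3) for i < j, Q(M)_{i,j} equals 0 or −M·ŷ_n. In particular, every entry of Q(M) is an affine function of M and the strictly lower-triangular entries are constant in M. -/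
open Matrix Filter Topology

/-- A tree-based hierarchy in canonical form on items `Fin N` with `K` constraints.
Constraint `k` has parent item `parent k` and nonempty child set `children k`;
each item is a child in at most one constraint, and the depth function satisfies
`D(c) = D(p_k) + 1` for every child `c` of `p_k`. -/
structure DepthHierarchy (N K : ℕ) where
  parent : Fin K → Fin N
  children : Fin K → Finset (Fin N)
  children_nonempty : ∀ k, (children k).Nonempty
  parent_notMem : ∀ k, parent k ∉ children k
  child_unique : ∀ k j : Fin K, ∀ n : Fin N, n ∈ children k → n ∈ children j → k = j
  depth : Fin N → ℕ
  depth_child : ∀ k : Fin K, ∀ c ∈ children k, depth c = depth (parent k) + 1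

variable {N K : ℕ}

/-- The canonical aggregation matrix of a tree-based hierarchy:
`A k (p_k) = 1`, `A k c = -1` for `c ∈ C_k`, and `0` otherwise. -/
noncomputable def aggMatrixD (T : DepthHierarchy N K) : Matrix (Fin K) (Fin N) ℝ :=
  fun k n => if n = T.parent k then 1 else if n ∈ T.children k then -1 else 0

/-- The bottom-heavy weight matrix: diagonal with entries `w_n(M) = M^(D n) / yhat n`. -/
noncomputable def bottomW (T : DepthHierarchy N K) (yhat : Fin N → ℝ) (M : ℝ) :
    Matrix (Fin N) (Fin N) ℝ :=
  Matrix.diagonal fun n => M ^ T.depth n / yhat n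

/-- `λ(M) = (A W(M)⁻¹ Aᵀ)⁻¹ A ŷ`. -/
noncomputable def lamBot (T : DepthHierarchy N K) (yhat : Fin N → ℝ) (M : ℝ) : Fin K → ℝ :=
  (aggMatrixD T * (bottomW T yhat M)⁻¹ * (aggMatrixD T)ᵀ)⁻¹.mulVec
    ((aggMatrixD T).mulVec yhat)

/-- `y(M) = ŷ - W(M)⁻¹ Aᵀ λ(M)`. -/
noncomputable def yBot (T : DepthHierarchy N K) (yhat : Fin N → ℝ) (M : ℝ) : Fin N → ℝ :=
  yhat - ((bottomW T yhat M)⁻¹ * (aggMatrixD T)ᵀ).mulVec (lamBot T yhat M)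

lemma agg_support {T : DepthHierarchy N K} {i : Fin K} {n : Fin N}
    (h : aggMatrixD T i n ≠ 0) : n = T.parent i ∨ n ∈ T.children i := by
  by_contra hc
  push_neg at hc
  simp [aggMatrixD, hc.1, hc.2] at h

lemma agg_parent (T : DepthHierarchy N K) (i : Fin K) :
    aggMatrixD T i (T.parent i) = 1 := by simp [aggMatrixD]

lemma agg_child (T : DepthHierarchy N K) {i : Fin K} {c : Fin N} (hc : c ∈ T.children i) :
    aggMatrixD T i c = -1 := by
  have : c ≠ T.parent i := by rintro rfl; exact T.parent_notMem i hc
  simp [aggMatrixD, this, hc]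

lemma bottomW_inv (T : DepthHierarchy N K) (yhat : Fin N → ℝ)
    (hy : ∀ n, 0 < yhat n) (M : ℝ) (hM : 0 < M) :
    (bottomW T yhat M)⁻¹ = Matrix.diagonal fun n => yhat n / M ^ T.depth n := by
  apply Matrix.inv_eq_right_inv
  rw [bottomW, Matrix.diagonal_mul_diagonal]
  rw [show (fun n => M ^ T.depth n / yhat n * (yhat n / M ^ T.depth n)) = fun _ => (1:ℝ) from ?_,
    Matrix.diagonal_one]
  funext n
  have h1 : (M:ℝ) ^ T.depth n ≠ 0 := pow_ne_zero _ hM.ne'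
  have h2 : yhat n ≠ 0 := (hy n).ne'
  field_simp

lemma Q_entry (T : DepthHierarchy N K) (yhat : Fin N → ℝ) (hy : ∀ n, 0 < yhat n)
    (M : ℝ) (hM : 0 < M) (i j : Fin K) :
    (aggMatrixD T * (bottomW T yhat M)⁻¹ * (aggMatrixD T)ᵀ *
      Matrix.diagonal (fun k => M ^ (T.depth (T.parent k) + 1))) i j =
    ∑ n, aggMatrixD T i n * aggMatrixD T j n *
      (yhat n * (M ^ (T.depth (T.parent j) + 1) / M ^ T.depth n)) := by
  rw [bottomW_inv T yhat hy M hM, Matrix.mul_diagonal, Matrix.mul_apply, Finset.sum_mul]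
  refine Finset.sum_congr rfl fun n _ => ?_
  simp only [Matrix.mul_diagonal, Matrix.transpose_apply]
  ring

-- classification of shared items
lemma shared_cases {T : DepthHierarchy N K} (hstrict : Function.Injective T.parent)
    {i j : Fin K} (hij : i ≠ j) {n : Fin N}
    (hi : aggMatrixD T i n ≠ 0) (hj : aggMatrixD T j n ≠ 0) :
    (n = T.parent i ∧ n ∈ T.children j) ∨ (n = T.parent j ∧ n ∈ T.children i) := by
  rcases agg_support hi with h1 | h1 <;> rcases agg_support hj with h2 | h2
  · exact absurd (hstrict (h1 ▸ h2 : T.parent i = T.parent j)) hij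
  · exact Or.inl ⟨h1, h2⟩
  · exact Or.inr ⟨h2, h1⟩
  · exact absurd (T.child_unique i j n h1 h2) hij

lemma shared_depth {T : DepthHierarchy N K} {i j : Fin K} {n : Fin N}
    (h : n = T.parent i ∧ n ∈ T.children j) :
    T.depth (T.parent i) = T.depth (T.parent j) + 1 := by
  have := T.depth_child j n h.2
  rw [h.1] at this
  exact this

lemma shared_unique {T : DepthHierarchy N K} (hstrict : Function.Injective T.parent)
    {i j : Fin K} (hij : i ≠ j) {n m : Fin N}
    (hin : aggMatrixD T i n ≠ 0) (hjn : aggMatrixD T j n ≠ 0)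
    (him : aggMatrixD T i m ≠ 0) (hjm : aggMatrixD T j m ≠ 0) : m = n := by
  rcases shared_cases hstrict hij hin hjn with h1 | h1 <;>
    rcases shared_cases hstrict hij him hjm with h2 | h2
  · rw [h2.1, h1.1]
  · have := shared_depth h1; have := shared_depth h2; omega
  · have := shared_depth h1; have := shared_depth h2; omega
  · rw [h2.1, h1.1]

lemma Q_diag (T : DepthHierarchy N K) (yhat : Fin N → ℝ) (hy : ∀ n, 0 < yhat n)
    (M : ℝ) (hM : 0 < M) (i : Fin K) :
    (aggMatrixD T * (bottomW T yhat M)⁻¹ * (aggMatrixD T)ᵀ *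
      Matrix.diagonal (fun k => M ^ (T.depth (T.parent k) + 1))) i i =
    M * yhat (T.parent i) + ∑ c ∈ T.children i, yhat c := by
  rw [Q_entry T yhat hy M hM]
  rw [← Finset.sum_subset (Finset.subset_univ (insert (T.parent i) (T.children i)))
    (fun n _ hn => by
      have h1 : n ≠ T.parent i := fun h => hn (h ▸ Finset.mem_insert_self _ _)
      have h2 : n ∉ T.children i := fun h => hn (Finset.mem_insert_of_mem h)
      simp [aggMatrixD, h1, h2])]
  rw [Finset.sum_insert (T.parent_notMem i), agg_parent]
  have hMd : M ^ (T.depth (T.parent i) + 1) / M ^ T.depth (T.parent i) = M := by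
    rw [pow_succ]
    field_simp
  rw [hMd]
  congr 1
  · ring
  · refine Finset.sum_congr rfl fun c hc => ?_
    rw [agg_child T hc, T.depth_child i c hc, div_self (pow_ne_zero _ hM.ne')]
    ring

lemma Q_off_zero (T : DepthHierarchy N K) (yhat : Fin N → ℝ) (hy : ∀ n, 0 < yhat n)
    {i j : Fin K}
    (h : ¬ ∃ n : Fin N, aggMatrixD T i n ≠ 0 ∧ aggMatrixD T j n ≠ 0)
    (M : ℝ) (hM : 0 < M) :
    (aggMatrixD T * (bottomW T yhat M)⁻¹ * (aggMatrixD T)ᵀ *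
      Matrix.diagonal (fun k => M ^ (T.depth (T.parent k) + 1))) i j = 0 := by
  rw [Q_entry T yhat hy M hM]
  refine Finset.sum_eq_zero fun n _ => ?_
  by_cases hi : aggMatrixD T i n = 0
  · rw [hi]; ring
  · by_cases hj : aggMatrixD T j n = 0
    · rw [hj]; ring
    · exact absurd ⟨n, hi, hj⟩ h

lemma Q_off_shared (T : DepthHierarchy N K) (hstrict : Function.Injective T.parent)
    (yhat : Fin N → ℝ) (hy : ∀ n, 0 < yhat n) {i j : Fin K} (hij : i ≠ j)
    {n : Fin N} (hi : aggMatrixD T i n ≠ 0) (hj : aggMatrixD T j n ≠ 0)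
    (M : ℝ) (hM : 0 < M) :
    (aggMatrixD T * (bottomW T yhat M)⁻¹ * (aggMatrixD T)ᵀ *
      Matrix.diagonal (fun k => M ^ (T.depth (T.parent k) + 1))) i j =
    aggMatrixD T i n * aggMatrixD T j n *
      (yhat n * (M ^ (T.depth (T.parent j) + 1) / M ^ T.depth n)) := by
  rw [Q_entry T yhat hy M hM]
  refine Finset.sum_eq_single n (fun m _ hmn => ?_) (fun h => absurd (Finset.mem_univ n) h)
  by_cases him : aggMatrixD T i m = 0
  · rw [him]; ring
  · by_cases hjm : aggMatrixD T j m = 0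
    · rw [hjm]; ring
    · exact absurd (shared_unique hstrict hij hi hj him hjm) hmn

lemma Q_lower (T : DepthHierarchy N K) (hstrict : Function.Injective T.parent)
    (yhat : Fin N → ℝ) (hy : ∀ n, 0 < yhat n)
    (hord : ∀ i j : Fin K, i ≤ j → T.depth (T.parent i) ≤ T.depth (T.parent j))
    {i j : Fin K} (hji : j < i)
    {n : Fin N} (hi : aggMatrixD T i n ≠ 0) (hj : aggMatrixD T j n ≠ 0)
    (M : ℝ) (hM : 0 < M) :
    (aggMatrixD T * (bottomW T yhat M)⁻¹ * (aggMatrixD T)ᵀ *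
      Matrix.diagonal (fun k => M ^ (T.depth (T.parent k) + 1))) i j = -yhat n := by
  rw [Q_off_shared T hstrict yhat hy hji.ne' hi hj M hM]
  have hcase : n = T.parent i ∧ n ∈ T.children j := by
    rcases shared_cases hstrict hji.ne' hi hj with h | h
    · exact h
    · have := shared_depth h
      have := hord j i hji.le
      omega
  obtain ⟨h1, h2⟩ := hcase
  subst h1
  rw [agg_parent, agg_child T h2, T.depth_child j _ h2, div_self (pow_ne_zero _ hM.ne')]
  ring

lemma Q_upper (T : DepthHierarchy N K) (hstrict : Function.Injective T.parent)
    (yhat : Fin N → ℝ) (hy : ∀ n, 0 < yhat n)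
    (hord : ∀ i j : Fin K, i ≤ j → T.depth (T.parent i) ≤ T.depth (T.parent j))
    {i j : Fin K} (hij : i < j)
    {n : Fin N} (hi : aggMatrixD T i n ≠ 0) (hj : aggMatrixD T j n ≠ 0)
    (M : ℝ) (hM : 0 < M) :
    (aggMatrixD T * (bottomW T yhat M)⁻¹ * (aggMatrixD T)ᵀ *
      Matrix.diagonal (fun k => M ^ (T.depth (T.parent k) + 1))) i j = -(M * yhat n) := by
  rw [Q_off_shared T hstrict yhat hy hij.ne hi hj M hM]
  have hcase : n = T.parent j ∧ n ∈ T.children i := by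
    rcases shared_cases hstrict hij.ne hi hj with h | h
    · have := shared_depth h
      have := hord i j hij.le
      omega
    · exact h
  obtain ⟨h1, h2⟩ := hcase
  subst h1
  have hMd : M ^ (T.depth (T.parent j) + 1) / M ^ T.depth (T.parent j) = M := by
    rw [pow_succ]
    field_simp
  rw [agg_parent, agg_child T h2, hMd]
  ring

/-- For a strict hierarchy with rows ordered by nondecreasing depth of
parents and `L(M) = diag(M^(D(p_k)+1))`, the matrix `Q(M) = A W(M)⁻¹ Aᵀ L(M)` has
diagonal entries `M ŷ_{p_i} + Σ_{c ∈ C_i} ŷ_c`; its strictly lower-triangular entries are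
constant in `M` (equal to `0` or `-ŷ_n` for a shared item `n`); its strictly
upper-triangular entries are `0` or `-M ŷ_n`; and every entry is an affine function
of `M`. -/
theorem Q_structure_bottom_heavy (T : DepthHierarchy N K)
    (hstrict : Function.Injective T.parent) (yhat : Fin N → ℝ)
    (hy : ∀ n, 0 < yhat n)
    (hord : ∀ i j : Fin K, i ≤ j → T.depth (T.parent i) ≤ T.depth (T.parent j)) :
    let Q : ℝ → Matrix (Fin K) (Fin K) ℝ := fun M =>
      aggMatrixD T * (bottomW T yhat M)⁻¹ * (aggMatrixD T)ᵀ *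
        Matrix.diagonal (fun k => M ^ (T.depth (T.parent k) + 1))
    (∀ M : ℝ, 0 < M → ∀ i : Fin K,
      Q M i i = M * yhat (T.parent i) + ∑ c ∈ T.children i, yhat c) ∧
    (∀ i j : Fin K, j < i →
      ((¬ ∃ n : Fin N, aggMatrixD T i n ≠ 0 ∧ aggMatrixD T j n ≠ 0) →
        ∀ M : ℝ, 0 < M → Q M i j = 0) ∧
      (∀ n : Fin N, aggMatrixD T i n ≠ 0 → aggMatrixD T j n ≠ 0 →
        ∀ M : ℝ, 0 < M → Q M i j = -yhat n) ∧
      (∃ b : ℝ, ∀ M : ℝ, 0 < M → Q M i j = b)) ∧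
    (∀ i j : Fin K, i < j → ∀ M : ℝ, 0 < M →
      Q M i j = 0 ∨ ∃ n : Fin N, Q M i j = -(M * yhat n)) ∧
    (∀ i j : Fin K, ∃ b c : ℝ, ∀ M : ℝ, 0 < M → Q M i j = b + c * M) := by
  intro Q
  refine ⟨fun M hM i => Q_diag T yhat hy M hM i, ?_, ?_, ?_⟩
  · intro i j hji
    refine ⟨fun h M hM => Q_off_zero T yhat hy h M hM,
      fun n hi hj M hM => Q_lower T hstrict yhat hy hord hji hi hj M hM, ?_⟩
    by_cases h : ∃ n : Fin N, aggMatrixD T i n ≠ 0 ∧ aggMatrixD T j n ≠ 0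
    · obtain ⟨n, hi, hj⟩ := h
      exact ⟨-yhat n, fun M hM => Q_lower T hstrict yhat hy hord hji hi hj M hM⟩
    · exact ⟨0, fun M hM => Q_off_zero T yhat hy h M hM⟩
  · intro i j hij M hM
    by_cases h : ∃ n : Fin N, aggMatrixD T i n ≠ 0 ∧ aggMatrixD T j n ≠ 0
    · obtain ⟨n, hi, hj⟩ := h
      exact Or.inr ⟨n, Q_upper T hstrict yhat hy hord hij hi hj M hM⟩
    · exact Or.inl (Q_off_zero T yhat hy h M hM)
  · intro i j
    rcases lt_trichotomy i j with hij | rfl | hji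
    · by_cases h : ∃ n : Fin N, aggMatrixD T i n ≠ 0 ∧ aggMatrixD T j n ≠ 0
      · obtain ⟨n, hi, hj⟩ := h
        refine ⟨0, -yhat n, fun M hM => ?_⟩
        rw [show Q M i j = -(M * yhat n) from Q_upper T hstrict yhat hy hord hij hi hj M hM]
        ring
      · exact ⟨0, 0, fun M hM => by
          rw [show Q M i j = 0 from Q_off_zero T yhat hy h M hM]; ring⟩
    · refine ⟨∑ c ∈ T.children i, yhat c, yhat (T.parent i), fun M hM => ?_⟩
      rw [show Q M i i = _ from Q_diag T yhat hy M hM i]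
      ring
    · by_cases h : ∃ n : Fin N, aggMatrixD T i n ≠ 0 ∧ aggMatrixD T j n ≠ 0
      · obtain ⟨n, hi, hj⟩ := h
        refine ⟨-yhat n, 0, fun M hM => ?_⟩
        rw [show Q M i j = -yhat n from Q_lower T hstrict yhat hy hord hji hi hj M hM]
        ring
      · exact ⟨0, 0, fun M hM => by
          rw [show Q M i j = 0 from Q_off_zero T yhat hy h M hM]; ring⟩
end
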